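/- arXiv:1908.05767 — 2 statements merged into one kernel-verified Lean document; each statement's English description precedes it below -/
import Mathlib

section
/- Let u, v be unit vectors in ℝ^n and let r be a random vector distributed uniformly on the unit sphere of ℝ^n. Then the probability that the hyperplane with normal r separates u and v is ℙ(sign(⟨r,u⟩) ≠ sign(⟨r,v⟩)) = arccos(⟨u,v⟩)/π. -/
/-!
By rotation invariance the probability that a random hyperplane separates two unit vectors
depends only on the angle `θ` between them, so it is a function `Q θ` of the angle. If `w` lies
strictly inside the arc from `u` to `v`, a hyperplane separates `u` from `v` exactly when it
separates `w` from precisely one of them, so `Q` is additive on `[0, π]`. Hyperplanes through the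
origin are null (by induction on the dimension: rotating a proper subspace produces infinitely many
copies of the same measure whose pairwise intersections are null), hence almost every hyperplane
separates `u` from `-u` and `Q π = 1`. A nonnegative additive function on `[0, π]` is linear, so
`Q θ = θ / π`.
-/

open MeasureTheory Real

noncomputable def sgn (t : ℝ) : ℝ := if 0 ≤ t then 1 else -1

open RealInnerProductSpace Module

theorem measure_eq_zero_of_pairwise_aedisjoint {α : Type*} [MeasurableSpace α] {μ : Measure α}
    [IsFiniteMeasure μ] {s : ℕ → Set α} {c : ENNReal} (hs : ∀ i, NullMeasurableSet (s i) μ)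
    (hd : Pairwise fun i j => AEDisjoint μ (s i) (s j)) (hc : ∀ i, μ (s i) = c) : c = 0 := by
  by_contra h
  have := tsum_meas_le_meas_iUnion_of_disjoint₀ μ hs hd
  simp only [hc, ENNReal.tsum_const_eq_top_of_ne_zero h, top_le_iff] at this
  exact measure_ne_top μ _ this

def AdditiveOnIcc (f : ℝ → ℝ) (L : ℝ) : Prop :=
  ∀ a b, 0 ≤ a → 0 ≤ b → a + b ≤ L → f (a + b) = f a + f b

namespace AdditiveOnIcc

variable {f : ℝ → ℝ} {L : ℝ}

theorem map_nat_mul (hf : AdditiveOnIcc f L) (k : ℕ) {t : ℝ} (ht : 0 ≤ t) (hk : k * t ≤ L) :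
    f (k * t) = k * f t := by
  induction k with
  | zero => simpa using hf 0 0 le_rfl le_rfl (by simpa using hk)
  | succ k ih =>
    push_cast at hk ⊢
    rw [add_one_mul, hf _ _ (by positivity) ht (by linarith), ih (by nlinarith)]
    ring

theorem map_div_mul (hf : AdditiveOnIcc f L) (hL : 0 ≤ L) {k m : ℕ} (hm : 0 < m) (hkm : k ≤ m) :
    f (k / m * L) = k / m * f L := by
  have hm' : (0 : ℝ) < m := Nat.cast_pos.2 hm
  have hstep : f (1 / m * L) = 1 / m * f L := by
    have h := hf.map_nat_mul m (t := 1 / m * L) (by positivity) (by field_simp; rfl)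
    rw [← mul_assoc, mul_one_div_cancel hm'.ne', one_mul] at h
    rw [h]
    field_simp
  have hkL : (k : ℝ) * (1 / m * L) ≤ L := by
    rw [← mul_assoc, mul_one_div]
    exact mul_le_of_le_one_left hL (div_le_one_of_le₀ (Nat.cast_le.2 hkm) hm'.le)
  rw [← mul_one_div, mul_assoc, hf.map_nat_mul k (by positivity) hkL, hstep, ← mul_assoc,
    mul_one_div]

theorem monotoneOn (hf : AdditiveOnIcc f L) (hpos : ∀ y ∈ Set.Icc 0 L, 0 ≤ f y) :
    MonotoneOn f (Set.Icc 0 L) := fun y hy z hz hyz => by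
  have h := hf y (z - y) hy.1 (by linarith) (by linarith [hz.2])
  rw [add_sub_cancel] at h
  linarith [hpos (z - y) ⟨by linarith, by linarith [hz.2, hy.1]⟩]

theorem abs_sub_div_mul_le (hf : AdditiveOnIcc f L) (hL : 0 < L)
    (hpos : ∀ y ∈ Set.Icc 0 L, 0 ≤ f y) {x : ℝ} (hx : x ∈ Set.Icc 0 L) {m : ℕ} (hm : 0 < m) :
    |f x - x / L * f L| ≤ 1 / m * f L := by
  have hm' : (0 : ℝ) < m := Nat.cast_pos.2 hm
  have hfL : 0 ≤ f L := hpos L ⟨hL.le, le_rfl⟩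
  rcases hx.2.eq_or_lt with rfl | hxL
  · rw [div_self hL.ne', one_mul, sub_self, abs_zero]
    positivity
  -- squeeze `x / L` between consecutive grid points `k / m` and `(k + 1) / m`
  set s := x / L
  have hs : 0 ≤ s := div_nonneg hx.1 hL.le
  set k := ⌊s * m⌋₊
  have hk_le : (k : ℝ) / m ≤ s := by
    rw [div_le_iff₀ hm']
    exact Nat.floor_le (by positivity)
  have hk_lt : s < (k + 1) / m := by
    rw [lt_div_iff₀ hm']
    exact Nat.lt_floor_add_one _
  have hkm : k + 1 ≤ m := by
    have : (k : ℝ) < m := calc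
      (k : ℝ) ≤ s * m := Nat.floor_le (by positivity)
      _ < m := mul_lt_of_lt_one_left hm' ((div_lt_one hL).2 hxL)
    exact_mod_cast this
  have hx_eq : x = s * L := (div_mul_cancel₀ x hL.ne').symm
  have hk1 : ((k + 1 : ℕ) : ℝ) / m ≤ 1 := div_le_one_of_le₀ (by exact_mod_cast hkm) hm'.le
  have hlo : (k : ℝ) / m * f L ≤ f x := by
    rw [← hf.map_div_mul hL.le hm (by omega)]
    refine hf.monotoneOn hpos ⟨by positivity, ?_⟩ hx ?_
    · exact mul_le_of_le_one_left hL.le (hk_le.trans (div_lt_one hL |>.2 hxL).le)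
    · exact hx_eq ▸ mul_le_mul_of_nonneg_right hk_le hL.le
  have hhi : f x ≤ (k + 1) / m * f L := by
    have h := hf.map_div_mul hL.le hm hkm
    push_cast at h hk1
    rw [← h]
    refine hf.monotoneOn hpos hx ⟨by positivity, mul_le_of_le_one_left hL.le hk1⟩ ?_
    exact hx_eq ▸ mul_le_mul_of_nonneg_right hk_lt.le hL.le
  rw [add_div] at hhi hk_lt
  rw [abs_le]
  constructor <;> nlinarith [mul_le_mul_of_nonneg_right hk_le hfL,
    mul_le_mul_of_nonneg_right hk_lt.le hfL]

theorem eq_div_mul (hf : AdditiveOnIcc f L) (hL : 0 < L) (hpos : ∀ y ∈ Set.Icc 0 L, 0 ≤ f y)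
    {x : ℝ} (hx : x ∈ Set.Icc 0 L) : f x = x / L * f L := by
  rw [← sub_eq_zero, ← abs_nonpos_iff]
  refine le_of_forall_pos_le_add fun ε hε => ?_
  obtain ⟨m, hm⟩ := exists_nat_gt (f L / ε)
  have hm0 : 0 < m := by exact_mod_cast (div_nonneg (hpos L ⟨hL.le, le_rfl⟩) hε.le).trans_lt hm
  calc _ ≤ 1 / m * f L := hf.abs_sub_div_mul_le hL hpos hx hm0
    _ ≤ 0 + ε := by
      rw [zero_add, one_div_mul_eq_div, div_le_iff₀ (Nat.cast_pos.2 hm0), mul_comm]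
      exact ((div_lt_iff₀ hε).1 hm).le

end AdditiveOnIcc

theorem sgn_eq_sgn_iff {a b : ℝ} : sgn a = sgn b ↔ (0 ≤ a ↔ 0 ≤ b) := by
  unfold sgn; split_ifs <;> norm_num [*]

section

variable {E : Type*} [NormedAddCommGroup E] [InnerProductSpace ℝ E] {e f : E}

theorem Submodule.exists_norm_eq_one_mem {K : Submodule ℝ E} (hK : K ≠ ⊥) : ∃ x ∈ K, ‖x‖ = 1 := by
  obtain ⟨x, hxK, hx⟩ := K.exists_mem_ne_zero_of_ne_bot hK
  exact ⟨‖x‖⁻¹ • x, K.smul_mem _ hxK, norm_smul_inv_norm (𝕜 := ℝ) hx⟩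

noncomputable def greatCircle (e f : E) (θ : ℝ) : E := cos θ • e + sin θ • f

@[simp]
theorem greatCircle_zero : greatCircle e f 0 = e := by simp [greatCircle]

@[simp]
theorem greatCircle_pi_div_two : greatCircle e f (π / 2) = f := by simp [greatCircle]

@[simp]
theorem greatCircle_pi : greatCircle e f π = -e := by simp [greatCircle]

theorem Orthonormal.inner_pair (h : Orthonormal ℝ ![e, f]) :
    ⟪e, e⟫ = 1 ∧ ⟪f, f⟫ = 1 ∧ ⟪e, f⟫ = 0 ∧ ⟪f, e⟫ = 0 := by
  have := orthonormal_iff_ite.1 h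
  exact ⟨by simpa using this 0 0, by simpa using this 1 1, by simpa using this 0 1,
    by simpa using this 1 0⟩

theorem inner_greatCircle (h : Orthonormal ℝ ![e, f]) (a b : ℝ) :
    ⟪greatCircle e f a, greatCircle e f b⟫ = cos (a - b) := by
  obtain ⟨hee, hff, hef, hfe⟩ := h.inner_pair
  simp only [greatCircle, inner_add_left, inner_add_right, real_inner_smul_left,
    real_inner_smul_right, hee, hff, hef, hfe, cos_sub]
  ring

noncomputable def planeRotation (e f : E) (a : ℝ) : E →ₗ[ℝ] E :=
  LinearMap.id
    + (cos a - 1) • ((innerSL ℝ e).toLinearMap.smulRight e + (innerSL ℝ f).toLinearMap.smulRight f)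
    + sin a • ((innerSL ℝ e).toLinearMap.smulRight f - (innerSL ℝ f).toLinearMap.smulRight e)

theorem planeRotation_apply (a : ℝ) (x : E) :
    planeRotation e f a x =
      x + (cos a - 1) • (⟪e, x⟫ • e + ⟪f, x⟫ • f) + sin a • (⟪e, x⟫ • f - ⟪f, x⟫ • e) := by
  simp [planeRotation]

theorem inner_planeRotation (h : Orthonormal ℝ ![e, f]) (a : ℝ) (x y : E) :
    ⟪planeRotation e f a x, planeRotation e f a y⟫ = ⟪x, y⟫ := by
  obtain ⟨hee, hff, hef, hfe⟩ := h.inner_pair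
  simp only [planeRotation_apply, inner_add_left, inner_add_right, inner_sub_left,
    inner_sub_right, real_inner_smul_left, real_inner_smul_right, hee, hff, hef, hfe,
    real_inner_comm x e, real_inner_comm x f, real_inner_comm y e, real_inner_comm y f]
  linear_combination (⟪x, e⟫ * ⟪y, e⟫ + ⟪x, f⟫ * ⟪y, f⟫) * cos_sq_add_sin_sq a

theorem planeRotation_greatCircle (h : Orthonormal ℝ ![e, f]) (a b : ℝ) :
    planeRotation e f a (greatCircle e f b) = greatCircle e f (a + b) := by
  obtain ⟨hee, hff, hef, hfe⟩ := h.inner_pair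
  simp only [planeRotation_apply, greatCircle, inner_add_right, real_inner_smul_right, hee, hff,
    hef, hfe, cos_add, sin_add]
  module

theorem exists_linearIsometryEquiv_greatCircle [FiniteDimensional ℝ E]
    (h : Orthonormal ℝ ![e, f]) (a : ℝ) :
    ∃ T : E ≃ₗᵢ[ℝ] E, ∀ b, T (greatCircle e f b) = greatCircle e f (a + b) :=
  ⟨((planeRotation e f a).isometryOfInner (inner_planeRotation h a)).toLinearIsometryEquiv rfl,
    planeRotation_greatCircle h a⟩

theorem Submodule.exists_linearIsometryEquiv_comap_not_le [FiniteDimensional ℝ E]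
    {K : Submodule ℝ E} (hK0 : K ≠ ⊥) (hK : K ≠ ⊤) :
    ∃ T : ℕ → E ≃ₗᵢ[ℝ] E, Pairwise fun j k =>
      ¬K.comap (T j).toLinearEquiv.toLinearMap ≤ K.comap (T k).toLinearEquiv.toLinearMap := by
  obtain ⟨e, heK, he⟩ := K.exists_norm_eq_one_mem hK0
  obtain ⟨f, hfK, hf⟩ := Kᗮ.exists_norm_eq_one_mem (Submodule.orthogonal_eq_bot_iff.not.2 hK)
  have hef : Orthonormal ℝ ![e, f] := by
    simp [he, hf, K.inner_right_of_mem_orthogonal heK hfK]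
  -- Rotating by `θ j` in the plane of `e ∈ K` and `f ⊥ K`, the `j`-th subspace contains the point
  -- at angle `θ j` and is orthogonal to the point at angle `θ j + π / 2`; for `j ≠ k` the points
  -- at `θ j` and `θ k + π / 2` are not orthogonal since `0 < |θ j - θ k| < π`.
  set θ : ℕ → ℝ := fun j => 1 / (j + 1)
  have hθ j : 0 < θ j ∧ θ j ≤ 1 :=
    ⟨by positivity, div_le_one_of_le₀ (by simp) (by positivity)⟩
  choose T hT using fun j => exists_linearIsometryEquiv_greatCircle hef (-θ j)
  refine ⟨T, fun j k hjk hle => ?_⟩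
  have hmem : greatCircle e f (θ j) ∈ K.comap (T k).toLinearEquiv.toLinearMap :=
    hle (by simpa [hT] using heK)
  have horth : ⟪greatCircle e f (θ k + π / 2), greatCircle e f (θ j)⟫ = 0 := by
    rw [← (T k).inner_map_map, hT, neg_add_cancel_left, greatCircle_pi_div_two, real_inner_comm]
    exact K.inner_right_of_mem_orthogonal hmem hfK
  rw [inner_greatCircle hef, add_sub_right_comm, cos_add_pi_div_two, neg_eq_zero,
    sin_eq_zero_iff_of_lt_of_lt, sub_eq_zero] at horth
  · exact hjk (by simpa [θ] using horth.symm)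
  all_goals linarith [hθ j, hθ k, pi_gt_three]

theorem exists_norm_eq_one_inner_eq_zero (hE : 2 ≤ finrank ℝ E) (u : E) :
    ∃ w, ‖w‖ = 1 ∧ ⟪u, w⟫ = 0 := by
  have hK : (ℝ ∙ u)ᗮ ≠ ⊥ := by
    rw [ne_eq, Submodule.orthogonal_eq_bot_iff]
    intro htop
    have := finrank_span_le_card (R := ℝ) ({u} : Set E)
    rw [htop, finrank_top] at this
    simp only [Set.toFinset_singleton, Finset.card_singleton] at this
    omega
  obtain ⟨w, hwK, hw⟩ := (ℝ ∙ u)ᗮ.exists_norm_eq_one_mem hK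
  exact ⟨w, hw, Submodule.mem_orthogonal_singleton_iff_inner_right.1 hwK⟩

theorem exists_orthonormal_greatCircle_arccos_eq (hE : 2 ≤ finrank ℝ E) {u v : E}
    (hu : ‖u‖ = 1) (hv : ‖v‖ = 1) :
    ∃ w, Orthonormal ℝ ![u, w] ∧ greatCircle u w (arccos ⟪u, v⟫) = v := by
  set t := ⟪u, v⟫
  have ht : |t| ≤ 1 := by simpa [hu, hv] using abs_real_inner_le_norm u v
  set y := v - t • u
  have huy : ⟪u, y⟫ = 0 := by
    simp [y, t, inner_sub_right, real_inner_smul_right, hu]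
  have hy : ‖y‖ ^ 2 = 1 - t ^ 2 := by
    rw [norm_sub_sq_real, norm_smul, real_inner_smul_right, real_inner_comm, hu, hv,
      Real.norm_eq_abs, mul_one, sq_abs]
    ring
  obtain ⟨w, hw, huw, hyw⟩ : ∃ w, ‖w‖ = 1 ∧ ⟪u, w⟫ = 0 ∧ y = ‖y‖ • w := by
    rcases eq_or_ne y 0 with hy0 | hy0
    · obtain ⟨w, hw, huw⟩ := exists_norm_eq_one_inner_eq_zero hE u
      exact ⟨w, hw, huw, by simp [hy0]⟩
    · exact ⟨‖y‖⁻¹ • y, norm_smul_inv_norm (𝕜 := ℝ) hy0, by simp [real_inner_smul_right, huy],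
        by simp [smul_smul, hy0]⟩
  refine ⟨w, by simp [hu, hw, huw], ?_⟩
  rw [greatCircle, cos_arccos (abs_le.1 ht).1 (abs_le.1 ht).2, sin_arccos, ← hy,
    sqrt_sq (norm_nonneg _), ← hyw]
  simp [y]

def separatingNormals (u v : E) : Set E := {r | sgn ⟪r, u⟫ ≠ sgn ⟪r, v⟫}

theorem mem_separatingNormals {u v r : E} :
    r ∈ separatingNormals u v ↔ ¬(0 ≤ ⟪r, u⟫ ↔ 0 ≤ ⟪r, v⟫) :=
  sgn_eq_sgn_iff.not

theorem separatingNormals_comm (u v : E) : separatingNormals u v = separatingNormals v u := by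
  ext r
  exact ne_comm

@[simp]
theorem separatingNormals_self (u : E) : separatingNormals u u = ∅ := by
  ext r
  simp [separatingNormals]

theorem preimage_separatingNormals (T : E ≃ₗᵢ[ℝ] E) (u v : E) :
    T ⁻¹' separatingNormals (T u) (T v) = separatingNormals u v := by
  ext r
  simp [separatingNormals]

theorem inner_nonneg_iff_of_smul_eq_add {u v w r : E} {α β γ : ℝ} (hα : 0 < α) (hβ : 0 < β)
    (hγ : 0 < γ) (hw : γ • w = α • u + β • v) (h : 0 ≤ ⟪r, u⟫ ↔ 0 ≤ ⟪r, v⟫) :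
    0 ≤ ⟪r, w⟫ ↔ 0 ≤ ⟪r, u⟫ := by
  have hinner : γ * ⟪r, w⟫ = α * ⟪r, u⟫ + β * ⟪r, v⟫ := by
    rw [← real_inner_smul_right, hw, inner_add_right, real_inner_smul_right, real_inner_smul_right]
  by_cases hu : 0 ≤ ⟪r, u⟫
  · have hv := h.1 hu
    simp only [hu, iff_true]
    nlinarith
  · have hv := mt h.2 hu
    simp only [hu, iff_false, not_le] at hv ⊢
    nlinarith

theorem measurableSet_separatingNormals [MeasurableSpace E] [OpensMeasurableSpace E] (u v : E) :
    MeasurableSet (separatingNormals u v) := by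
  have hsgn (w : E) : Measurable fun r : E => sgn ⟪r, w⟫ :=
    Measurable.ite (measurableSet_le measurable_const (by fun_prop)) measurable_const
      measurable_const
  exact (measurableSet_eq_fun (hsgn u) (hsgn v)).compl

variable [MeasurableSpace E] {μ : Measure E}

theorem measureReal_separatingNormals_eq_add [OpensMeasurableSpace E] [IsFiniteMeasure μ]
    {u v w : E} {α β γ : ℝ} (hα : 0 < α) (hβ : 0 < β) (hγ : 0 < γ) (hw : γ • w = α • u + β • v) :
    μ.real (separatingNormals u v) =
      μ.real (separatingNormals u w) + μ.real (separatingNormals w v) := by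
  have hside r := inner_nonneg_iff_of_smul_eq_add (r := r) hα hβ hγ hw
  have hunion : separatingNormals u v = separatingNormals u w ∪ separatingNormals w v := by
    ext r
    simp only [Set.mem_union, mem_separatingNormals]
    have := hside r
    tauto
  have hdisj : Disjoint (separatingNormals u w) (separatingNormals w v) := by
    refine Set.disjoint_left.2 fun r h₁ h₂ => ?_
    rw [mem_separatingNormals] at h₁ h₂
    have := hside r
    tauto
  rw [hunion, measureReal_union hdisj (measurableSet_separatingNormals w v)]

theorem measureReal_separatingNormals_neg_right [OpensMeasurableSpace E] [IsProbabilityMeasure μ]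
    {v : E} (hv : μ {r | ⟪r, v⟫ = 0} = 0) (u : E) :
    μ.real (separatingNormals u (-v)) = 1 - μ.real (separatingNormals u v) := by
  have hae : separatingNormals u (-v) =ᵐ[μ] ((separatingNormals u v)ᶜ : Set E) := by
    refine Filter.eventuallyEq_set.2 ?_
    filter_upwards [measure_eq_zero_iff_ae_notMem.1 hv] with r hr
    rw [Set.mem_compl_iff, mem_separatingNormals, mem_separatingNormals, inner_neg_right,
      neg_nonneg]
    rcases (Ne.symm hr).lt_or_gt with h | h <;> simp [h.le, not_le.2 h]
  rw [measureReal_congr hae, probReal_compl_eq_one_sub (measurableSet_separatingNormals u v)]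

variable [BorelSpace E]

theorem measure_preimage_linearIsometryEquiv (hinv : ∀ T : E ≃ₗᵢ[ℝ] E, μ.map T = μ)
    (T : E ≃ₗᵢ[ℝ] E) (s : Set E) : μ (T ⁻¹' s) = μ s := by
  conv_rhs => rw [← hinv T]
  exact (T.toHomeomorph.toMeasurableEquiv.map_apply s).symm

theorem measureReal_separatingNormals_map (hinv : ∀ T : E ≃ₗᵢ[ℝ] E, μ.map T = μ)
    (T : E ≃ₗᵢ[ℝ] E) (u v : E) :
    μ.real (separatingNormals (T u) (T v)) = μ.real (separatingNormals u v) := by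
  rw [measureReal_def, measureReal_def, ← measure_preimage_linearIsometryEquiv hinv T,
    preimage_separatingNormals]

theorem measure_submodule_eq_zero [FiniteDimensional ℝ E] [IsFiniteMeasure μ]
    (hinv : ∀ T : E ≃ₗᵢ[ℝ] E, μ.map T = μ) (h0 : μ {0} = 0) {K : Submodule ℝ E} (hK : K ≠ ⊤) :
    μ K = 0 := by
  replace hK := Submodule.finrank_lt hK
  induction hd : finrank ℝ K using Nat.strong_induction_on generalizing K with
  | _ d ih =>
  rcases eq_or_ne K ⊥ with rfl | hK0
  · simpa using h0
  obtain ⟨T, hT⟩ := K.exists_linearIsometryEquiv_comap_not_le hK0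
    (by rintro rfl; simp at hK)
  set K' : ℕ → Submodule ℝ E := fun j => K.comap (T j).toLinearEquiv.toLinearMap
  have hrank j : finrank ℝ (K' j) = d := by
    have := LinearEquiv.finrank_map_eq (T j).toLinearEquiv.symm K
    rwa [← Submodule.comap_equiv_eq_map_symm, hd] at this
  refine measure_eq_zero_of_pairwise_aedisjoint
    (fun j => (K' j).closed_of_finiteDimensional.measurableSet.nullMeasurableSet)
    (fun j k hjk => ?_) (fun j => measure_preimage_linearIsometryEquiv hinv (T j) K)
  have hlt : finrank ℝ ↥(K' j ⊓ K' k) < d :=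
    hrank j ▸ Submodule.finrank_lt_finrank_of_lt (inf_lt_left.2 (hT hjk))
  exact ih _ hlt (hlt.trans (hd ▸ hK)) rfl

theorem measure_hyperplane_eq_zero [FiniteDimensional ℝ E] [IsFiniteMeasure μ]
    (hinv : ∀ T : E ≃ₗᵢ[ℝ] E, μ.map T = μ) (h0 : μ {0} = 0)
    {w : E} (hw : w ≠ 0) : μ {r | ⟪r, w⟫ = 0} = 0 := by
  have hK : (ℝ ∙ w)ᗮ ≠ ⊤ := by
    rwa [ne_eq, Submodule.orthogonal_eq_top_iff, Submodule.span_singleton_eq_bot]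
  have hset : {r | ⟪r, w⟫ = 0} = ((ℝ ∙ w)ᗮ : Set E) := by
    ext r
    exact Submodule.mem_orthogonal_singleton_iff_inner_left.symm
  rw [hset]
  exact measure_submodule_eq_zero hinv h0 hK

theorem measureReal_separatingNormals_greatCircle [FiniteDimensional ℝ E] [IsProbabilityMeasure μ]
    (hinv : ∀ T : E ≃ₗᵢ[ℝ] E, μ.map T = μ) (h : Orthonormal ℝ ![e, f])
    (he : μ {r | ⟪r, e⟫ = 0} = 0) {θ : ℝ} (hθ : θ ∈ Set.Icc 0 π) :
    μ.real (separatingNormals e (greatCircle e f θ)) = θ / π := by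
  set Q : ℝ → ℝ := fun θ => μ.real (separatingNormals e (greatCircle e f θ))
  have hrot a b :
      μ.real (separatingNormals (greatCircle e f a) (greatCircle e f (a + b))) = Q b := by
    obtain ⟨T, hT⟩ := exists_linearIsometryEquiv_greatCircle h a
    have := measureReal_separatingNormals_map hinv T (greatCircle e f 0) (greatCircle e f b)
    rwa [hT, hT, add_zero, greatCircle_zero] at this
  have hQ0 : Q 0 = 0 := by simp [Q]
  have hsymm a : Q (π - a) = 1 - Q a := by
    rw [← hrot a, add_sub_cancel, greatCircle_pi, measureReal_separatingNormals_neg_right he,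
      separatingNormals_comm]
  have hQπ : Q π = 1 := by simpa [hQ0] using hsymm 0
  have hadd : AdditiveOnIcc Q π := by
    intro a b ha hb hab
    rcases ha.eq_or_lt with rfl | ha
    · rw [zero_add, hQ0, zero_add]
    rcases hb.eq_or_lt with rfl | hb
    · rw [add_zero, hQ0, add_zero]
    rcases hab.eq_or_lt with hab | hab
    · rw [hab, hQπ, ← sub_eq_of_eq_add' hab.symm, hsymm]
      ring
    have hcone : sin (a + b) • greatCircle e f a =
        sin b • e + sin a • greatCircle e f (a + b) := by
      simp only [greatCircle, sin_add, cos_add]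
      linear_combination (norm := module) (sin b * sin_sq_add_cos_sq a) • e
    rw [← hrot a b]
    exact measureReal_separatingNormals_eq_add (sin_pos_of_pos_of_lt_pi hb (by linarith))
      (sin_pos_of_pos_of_lt_pi ha (by linarith)) (sin_pos_of_pos_of_lt_pi (by linarith) hab) hcone
  show Q θ = θ / π
  rw [hadd.eq_div_mul pi_pos (fun _ _ => measureReal_nonneg) hθ, hQπ, mul_one]

end

/-- If `u, v` are unit vectors in `ℝ^n` (`n ≥ 2`) and `r` is distributed
according to the uniform (i.e. rotation-invariant) probability measure on the unit
sphere, then the probability that a random hyperplane with normal `r` separates `u`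
and `v` is `arccos ⟨u, v⟩ / π`. -/
theorem prob_hyperplane_separates_eq_arccos_div_pi
    (n : ℕ) (hn : 2 ≤ n)
    (u v : EuclideanSpace ℝ (Fin n)) (hu : ‖u‖ = 1) (hv : ‖v‖ = 1)
    (μ : Measure (EuclideanSpace ℝ (Fin n))) [IsProbabilityMeasure μ]
    (hsphere : μ {r | ‖r‖ = 1} = 1)
    (hinv : ∀ T : EuclideanSpace ℝ (Fin n) ≃ₗᵢ[ℝ] EuclideanSpace ℝ (Fin n),
      μ.map T = μ) :
    μ {r | sgn (inner ℝ r u : ℝ) ≠ sgn (inner ℝ r v : ℝ)} =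
      ENNReal.ofReal (Real.arccos (inner ℝ u v : ℝ) / π) := by
  have h0 : μ {0} = 0 := by
    refine measure_mono_null (fun r hr => by simp [Set.mem_singleton_iff.1 hr])
      ((prob_compl_eq_zero_iff (isClosed_eq continuous_norm continuous_const).measurableSet).2
        hsphere)
  have hu0 := measure_hyperplane_eq_zero hinv h0 (w := u) (by rintro rfl; simp at hu)
  obtain ⟨w, huw, hvw⟩ := exists_orthonormal_greatCircle_arccos_eq (by simpa using hn) hu hv
  have := measureReal_separatingNormals_greatCircle hinv huw hu0
    (θ := arccos ⟪u, v⟫) ⟨arccos_nonneg _, arccos_le_pi _⟩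
  rw [hvw] at this
  rw [← this, ofReal_measureReal]
  rfl
end

section
/- For every x ∈ [−1, 1], the inequality (1/π)·arccos(x) ≥ 0.878·(1 − x)/2 holds; that is, the Goemans–Williamson constant α_GW = min over x ∈ [−1,1] of ((1/π)·arccos(x)) / ((1/2)(1−x)) satisfies α_GW > 0.878. -/
/-!
Write `θ = arccos x ∈ (0, π]`; the claim is `0.439 π (1 - cos θ) < θ`.
For `θ ≤ π - 2` this follows from `1 - cos θ ≤ θ² / 2`. Otherwise put `θ = π - 2u` with
`0 ≤ u < 1`: then `1 - cos θ = 2 - 2 sin² u`, and the claim becomes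
`2u < π (0.122 + 0.878 sin² u)`, which survives replacing `sin u` by `u - u³/6` and `π` by `3.14`
because the true minimum of the ratio, about `0.87856`, exceeds `0.878`.
-/

open Real

lemma two_mul_lt_gw_poly {u : ℝ} (h0 : 0 ≤ u) (h1 : u ≤ 1) :
    2 * u < 3.14 * (0.122 + 0.878 * (u - u ^ 3 / 6) ^ 2) := by
  nlinarith [sq_nonneg (u - 0.406), sq_nonneg (u * (u - 0.406)),
    mul_nonneg (pow_nonneg h0 3) (sub_nonneg.2 h1)]

lemma two_mul_lt_pi_mul_sin_sq {u : ℝ} (h0 : 0 ≤ u) (h1 : u ≤ 1) :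
    2 * u < π * (0.122 + 0.878 * sin u ^ 2) := by
  have hcube : 0 ≤ u - u ^ 3 / 6 := by nlinarith [pow_le_one₀ h0 h1 (n := 2)]
  have hsin : (u - u ^ 3 / 6) ^ 2 ≤ sin u ^ 2 := pow_le_pow_left₀ hcube (sin_ge_sub_cube h0) 2
  calc 2 * u < 3.14 * (0.122 + 0.878 * (u - u ^ 3 / 6) ^ 2) := two_mul_lt_gw_poly h0 h1
    _ ≤ π * (0.122 + 0.878 * sin u ^ 2) := by
      gcongr
      exact pi_gt_d2.le

lemma gw_mul_one_sub_cos_lt_of_le_pi_sub_two {θ : ℝ} (h0 : 0 < θ) (h1 : θ ≤ π - 2) :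
    0.439 * π * (1 - cos θ) < θ := by
  have hcos : 1 - θ ^ 2 / 2 ≤ cos θ := one_sub_sq_div_two_le_cos
  nlinarith [pi_lt_d2, pi_pos, mul_pos h0 pi_pos]

lemma gw_mul_one_sub_cos_lt_of_pi_sub_two_le {θ : ℝ} (h0 : π - 2 ≤ θ) (h1 : θ ≤ π) :
    0.439 * π * (1 - cos θ) < θ := by
  set u := (π - θ) / 2
  have hθ : θ = π - 2 * u := by ring
  have hcos : 1 - cos θ = 2 - 2 * sin u ^ 2 := by
    rw [hθ, cos_pi_sub, cos_two_mul, cos_sq']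
    ring
  have key := two_mul_lt_pi_mul_sin_sq (u := u) (by linarith) (by linarith)
  rw [hcos]
  linarith

lemma gw_mul_one_sub_cos_lt {θ : ℝ} (h0 : 0 < θ) (h1 : θ ≤ π) :
    0.439 * π * (1 - cos θ) < θ := by
  rcases le_total θ (π - 2) with h | h
  · exact gw_mul_one_sub_cos_lt_of_le_pi_sub_two h0 h
  · exact gw_mul_one_sub_cos_lt_of_pi_sub_two_le h h1

lemma gw_mul_lt_arccos {x : ℝ} (hx1 : -1 ≤ x) (hx2 : x < 1) :
    0.878 * ((1 - x) / 2) < (1 / π) * arccos x := by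
  have key := gw_mul_one_sub_cos_lt (arccos_pos.2 hx2) (arccos_le_pi x)
  rw [cos_arccos hx1 hx2.le] at key
  rw [one_div_mul_eq_div, lt_div_iff₀ pi_pos]
  linarith

/-- For every `x ∈ [-1, 1]` one has
`(1/π) · arccos x ≥ 0.878 · (1 - x)/2`; equivalently, the Goemans–Williamson constant
`α_GW = min_{x ∈ [-1,1)} ((1/π) · arccos x) / ((1/2) · (1 - x))` satisfies
`α_GW > 0.878`. -/
theorem goemans_williamson_constant_gt
    : (∀ x ∈ Set.Icc (-1 : ℝ) 1, 0.878 * ((1 - x) / 2) ≤ (1 / π) * Real.arccos x) ∧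
      (∀ α : ℝ, IsLeast {r : ℝ | ∃ x ∈ Set.Ico (-1 : ℝ) 1,
          r = ((1 / π) * Real.arccos x) / ((1 / 2) * (1 - x))} α → 0.878 < α) := by
  constructor
  · rintro x ⟨hx1, hx2⟩
    rcases hx2.eq_or_lt with rfl | hx2
    · simp
    · exact (gw_mul_lt_arccos hx1 hx2).le
  · rintro α ⟨⟨x, ⟨hx1, hx2⟩, rfl⟩, -⟩
    rw [lt_div_iff₀ (by linarith)]
    linarith [gw_mul_lt_arccos hx1 hx2]
end
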